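/- arXiv:2406.18683 — 2 statements merged into one kernel-verified Lean document; each statement's English description precedes it below -/
import Mathlib

section
/- Let H : ℝ² → ℝ be a 2D anisotropy (nonnegative, convex, 1-homogeneous). Then H vanishes at some nonzero point of ℝ² if and only if there exist a constant c ≥ 0 and an angle θ ∈ [0,π] such that H(x,y) = c·|x·cos θ + y·sin θ| for all (x,y) ∈ ℝ². (Characterization of degenerate 2D anisotropies.) -/
open MeasureTheory Real Set

noncomputable section

/-- A 2D anisotropy: nonnegative, convex and 1-homogeneous function on `ℝ²`. -/
def IsAnisotropy (H : ℝ × ℝ → ℝ) : Prop :=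
  (∀ ξ : ℝ × ℝ, 0 ≤ H ξ) ∧ ConvexOn ℝ Set.univ H ∧
    ∀ (t : ℝ) (ξ : ℝ × ℝ), H (t • ξ) = |t| * H ξ

/-- A degenerate anisotropy vanishes at some nonzero point. -/
def IsDegenerate (H : ℝ × ℝ → ℝ) : Prop := ∃ ξ : ℝ × ℝ, ξ ≠ 0 ∧ H ξ = 0

/-- `‖H‖`: the maximum of `H` on the Euclidean unit circle. -/
def anorm (H : ℝ × ℝ → ℝ) : ℝ := sSup (H '' {z : ℝ × ℝ | z.1 ^ 2 + z.2 ^ 2 = 1})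

/-- The Euclidean norm on `ℝ²`. -/
def Enorm (z : ℝ × ℝ) : ℝ := Real.sqrt (z.1 ^ 2 + z.2 ^ 2)

/-- A membrane: a nonempty bounded open connected subset of `ℝ²`. -/
def IsMembrane (Ω : Set (ℝ × ℝ)) : Prop :=
  Ω.Nonempty ∧ IsOpen Ω ∧ IsConnected Ω ∧ Bornology.IsBounded Ω

/-- The gradient of `u : ℝ² → ℝ`. -/
def grad (u : ℝ × ℝ → ℝ) (z : ℝ × ℝ) : ℝ × ℝ :=
  (fderiv ℝ u z (1, 0), fderiv ℝ u z (0, 1))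

/-- The anisotropic least level `λ_{1,p}^H(Ω)`: infimum of the anisotropic Rayleigh
quotient over nonzero smooth functions compactly supported in `Ω`. -/
def lam (p : ℝ) (H : ℝ × ℝ → ℝ) (Ω : Set (ℝ × ℝ)) : ℝ :=
  sInf { r : ℝ | ∃ u : ℝ × ℝ → ℝ, ContDiff ℝ (⊤ : ℕ∞) u ∧ HasCompactSupport u ∧
    tsupport u ⊆ Ω ∧ u ≠ 0 ∧
    r = (∫ z in Ω, H (grad u z) ^ p) / (∫ z in Ω, |u z| ^ p) }

/-- The one-dimensional least level `λ_{1,p}(0,L)`. -/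
def lam1d (p L : ℝ) : ℝ :=
  sInf { r : ℝ | ∃ u : ℝ → ℝ, ContDiff ℝ (⊤ : ℕ∞) u ∧ HasCompactSupport u ∧
    tsupport u ⊆ Set.Ioo 0 L ∧ u ≠ 0 ∧
    r = (∫ t in Set.Ioo 0 L, |deriv u t| ^ p) / (∫ t in Set.Ioo 0 L, |u t| ^ p) }

/-- The directional width `L_θ` of `Ω`: the supremum of the lengths of connected
subsets of lines in the direction `(cos θ, sin θ)` contained in `Ω`. -/
def width (Ω : Set (ℝ × ℝ)) (θ : ℝ) : ℝ :=
  sSup { r : ℝ | ∃ v : ℝ × ℝ, ∃ J : Set ℝ, IsConnected J ∧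
    (∀ t ∈ J, (t * Real.cos θ + v.1, t * Real.sin θ + v.2) ∈ Ω) ∧
    r = (volume J).toReal }

/-- The optimal lower anisotropic constant `λ_{1,p}^{min}(Ω)`. -/
def lamMin (p : ℝ) (Ω : Set (ℝ × ℝ)) : ℝ :=
  sInf { r : ℝ | ∃ H : ℝ × ℝ → ℝ, IsAnisotropy H ∧ anorm H = 1 ∧ r = lam p H Ω }

/-- The optimal upper anisotropic constant `λ_{1,p}^{max}(Ω)`. -/
def lamMax (p : ℝ) (Ω : Set (ℝ × ℝ)) : ℝ :=
  sSup { r : ℝ | ∃ H : ℝ × ℝ → ℝ, IsAnisotropy H ∧ anorm H = 1 ∧ r = lam p H Ω }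

/-- The Euclidean diameter of `Ω ⊆ ℝ²`. -/
def eudiam (Ω : Set (ℝ × ℝ)) : ℝ :=
  sSup { r : ℝ | ∃ z ∈ Ω, ∃ w ∈ Ω, r = Enorm (z - w) }

/-- `Ω` has `C^{0,1}` (Lipschitz) boundary: near each boundary point, after a rigid
motion, `Ω` is the open region strictly below the graph of a Lipschitz function. -/
def HasC01Boundary (Ω : Set (ℝ × ℝ)) : Prop :=
  ∀ z ∈ frontier Ω, ∃ U ∈ nhds z, ∃ A : (ℝ × ℝ) ≃ₗᵢ[ℝ] (ℝ × ℝ), ∃ b : ℝ × ℝ,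
    ∃ g : ℝ → ℝ, (∃ K : NNReal, LipschitzWith K g) ∧
      ∀ w ∈ U, (w ∈ Ω ↔ (A w + b).2 < g (A w + b).1)

/-- `Ω` has `C^{1,α}` boundary: near each boundary point, after a rigid motion,
`Ω` is the open region strictly below the graph of a `C^1` function whose
derivative is `α`-Hölder continuous. -/
def HasC1alphaBoundary (Ω : Set (ℝ × ℝ)) (α : NNReal) : Prop :=
  ∀ z ∈ frontier Ω, ∃ U ∈ nhds z, ∃ A : (ℝ × ℝ) ≃ₗᵢ[ℝ] (ℝ × ℝ), ∃ b : ℝ × ℝ,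
    ∃ g : ℝ → ℝ, ContDiff ℝ 1 g ∧ (∃ C : NNReal, HolderWith C α (deriv g)) ∧
      ∀ w ∈ U, (w ∈ Ω ↔ (A w + b).2 < g (A w + b).1)

lemma aniso_subadd {H : ℝ × ℝ → ℝ} (hH : IsAnisotropy H) (a b : ℝ × ℝ) :
    H (a + b) ≤ H a + H b := by
  obtain ⟨hpos, hconv, hhom⟩ := hH
  have h3 : a + b = (2:ℝ) • ((1/2 : ℝ) • a + (1/2 : ℝ) • b) := by module
  have h2 := hconv.2 (Set.mem_univ a) (Set.mem_univ b)
    (by norm_num : (0:ℝ) ≤ 1/2) (by norm_num : (0:ℝ) ≤ 1/2) (by norm_num)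
  have h1 := hhom 2 ((1/2 : ℝ) • a + (1/2 : ℝ) • b)
  rw [h3, h1]
  simp only [smul_eq_mul] at h2 ⊢
  rw [abs_of_pos (by norm_num : (0:ℝ) < 2)]
  linarith

lemma aniso_add_zero {H : ℝ × ℝ → ℝ} (hH : IsAnisotropy H) {q : ℝ × ℝ} (hq : H q = 0)
    (ξ : ℝ × ℝ) : H (ξ + q) = H ξ := by
  have h1 := aniso_subadd hH ξ q
  have hneg : H (-q) = 0 := by
    have := hH.2.2 (-1) q
    simp only [neg_one_smul] at this
    simp [this, hq]
  have h2 := aniso_subadd hH (ξ + q) (-q)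
  simp only [add_neg_cancel_right] at h2
  linarith

/-- characterization of degenerate 2D anisotropies. -/
theorem degenerate_anisotropy_characterization (H : ℝ × ℝ → ℝ) (hH : IsAnisotropy H) :
    IsDegenerate H ↔ ∃ c : ℝ, 0 ≤ c ∧ ∃ θ ∈ Set.Icc (0 : ℝ) π,
      ∀ x y : ℝ, H (x, y) = c * |x * Real.cos θ + y * Real.sin θ| := by
  obtain ⟨hpos, hconv, hhom⟩ := hH
  have hH' : IsAnisotropy H := ⟨hpos, hconv, hhom⟩
  constructor
  · rintro ⟨⟨x₀, y₀⟩, hξ, h0⟩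
    -- general claim for a perpendicular unit vector (a,b) with b ≥ 0
    have key : ∀ a b : ℝ, a^2 + b^2 = 1 → 0 ≤ b → H (-b, a) = 0 →
        ∃ c : ℝ, 0 ≤ c ∧ ∃ θ ∈ Set.Icc (0 : ℝ) π,
          ∀ x y : ℝ, H (x, y) = c * |x * Real.cos θ + y * Real.sin θ| := by
      intro a b hab hb hp
      have ha1 : a^2 ≤ 1 := by nlinarith [sq_nonneg b]
      have ha1' : |a| ≤ 1 := by
        rw [← abs_one]; exact abs_le_abs (by nlinarith [abs_nonneg a, sq_abs a])
          (by nlinarith [abs_nonneg a, sq_abs a])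
      have ham : -1 ≤ a := (abs_le.mp ha1').1
      have haM : a ≤ 1 := (abs_le.mp ha1').2
      refine ⟨H (a, b), hpos _, Real.arccos a,
        ⟨Real.arccos_nonneg a, Real.arccos_le_pi a⟩, ?_⟩
      have hcos : Real.cos (Real.arccos a) = a := Real.cos_arccos ham haM
      have hsin : Real.sin (Real.arccos a) = b := by
        rw [Real.sin_arccos]
        have : 1 - a^2 = b^2 := by linarith
        rw [this, Real.sqrt_sq hb]
      intro x y
      rw [hcos, hsin]
      set s := x * a + y * b with hs
      set t := -x * b + y * a with ht
      have hdec : ((x, y) : ℝ × ℝ) = s • ((a, b) : ℝ × ℝ) + t • ((-b, a) : ℝ × ℝ) := by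
        have h1 : x = s * a + t * (-b) := by rw [hs, ht]; linear_combination (-x) * hab
        have h2 : y = s * b + t * a := by rw [hs, ht]; linear_combination (-y) * hab
        rw [Prod.ext_iff]
        constructor <;> simp [Prod.smul_def, smul_eq_mul] <;> linarith
      have hq : H (t • ((-b, a) : ℝ × ℝ)) = 0 := by rw [hhom, hp, mul_zero]
      rw [hdec, aniso_add_zero hH' hq, hhom]
      ring
    have hr2 : 0 < x₀^2 + y₀^2 := by
      have hxy : x₀ ≠ 0 ∨ y₀ ≠ 0 := by
        by_contra hcon; push_neg at hcon
        exact hξ (by simp [Prod.ext_iff, hcon.1, hcon.2])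
      rcases hxy with h | h
      · positivity
      · positivity
    set r := Real.sqrt (x₀^2 + y₀^2) with hrdef
    have hrpos : 0 < r := Real.sqrt_pos.mpr hr2
    have hrsq : r^2 = x₀^2 + y₀^2 := Real.sq_sqrt hr2.le
    by_cases hx : 0 ≤ x₀
    · apply key (-y₀/r) (x₀/r)
      · field_simp; nlinarith [hrsq]
      · exact div_nonneg hx hrpos.le
      · have he : ((-(x₀/r) : ℝ), (-y₀/r : ℝ)) = (-(1/r)) • ((x₀, y₀) : ℝ × ℝ) := by
          rw [Prod.smul_mk, Prod.mk.injEq]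
          constructor <;> (rw [smul_eq_mul]; ring)
        rw [he, hhom, h0, mul_zero]
    · apply key (y₀/r) (-x₀/r)
      · field_simp; nlinarith [hrsq]
      · exact div_nonneg (by linarith [lt_of_not_ge hx]) hrpos.le
      · have he : ((-(-x₀/r) : ℝ), (y₀/r : ℝ)) = ((1/r)) • ((x₀, y₀) : ℝ × ℝ) := by
          rw [Prod.smul_mk, Prod.mk.injEq]
          constructor <;> (rw [smul_eq_mul]; ring)
        rw [he, hhom, h0, mul_zero]
  · rintro ⟨c, hc, θ, hθ, hce⟩
    refine ⟨(-Real.sin θ, Real.cos θ), ?_, ?_⟩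
    · intro h
      rw [Prod.ext_iff] at h
      have := Real.sin_sq_add_cos_sq θ
      simp only [Prod.fst_zero, Prod.snd_zero, neg_eq_zero] at h
      rw [h.1, h.2] at this
      norm_num at this
    · rw [hce]
      have : -Real.sin θ * Real.cos θ + Real.cos θ * Real.sin θ = 0 := by ring
      rw [this, abs_zero, mul_zero]
end
end

section
/- For every 2D anisotropy H : ℝ² → ℝ there exists an angle θ ∈ [0,π] such that H(x,y) ≥ ‖H‖·|x·cos θ + y·sin θ| for all (x,y) ∈ ℝ². In particular, every 2D anisotropy dominates a degenerate 2D anisotropy with the same norm ‖·‖. -/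
open MeasureTheory Real Set

noncomputable section

set_option maxHeartbeats 2000000 in
/-- every anisotropy dominates a degenerate one of the same norm. -/
theorem anisotropy_dominates_degenerate (H : ℝ × ℝ → ℝ) (hH : IsAnisotropy H) :
    ∃ θ ∈ Set.Icc (0 : ℝ) π, ∀ x y : ℝ,
      anorm H * |x * Real.cos θ + y * Real.sin θ| ≤ H (x, y) := by
  obtain ⟨hpos, hconv, hhom⟩ := hH
  have hcont : Continuous H := continuousOn_univ.mp (hconv.continuousOn isOpen_univ)
  have hScomp : IsCompact {z : ℝ × ℝ | z.1 ^ 2 + z.2 ^ 2 = 1} := by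
    apply Metric.isCompact_of_isClosed_isBounded
    · exact isClosed_eq (by fun_prop) continuous_const
    · apply Bornology.IsBounded.subset (Metric.isBounded_closedBall (x := (0:ℝ×ℝ)) (r := 1))
      intro z hz
      simp only [mem_setOf_eq] at hz
      simp only [Metric.mem_closedBall, dist_zero_right, Prod.norm_def, Real.norm_eq_abs]
      have h1 : |z.1| ≤ 1 := by nlinarith [sq_nonneg z.1, sq_nonneg z.2, abs_nonneg z.1, sq_abs z.1]
      have h2 : |z.2| ≤ 1 := by nlinarith [sq_nonneg z.2, abs_nonneg z.2, sq_abs z.2]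
      exact sup_le h1 h2
  have hSne : ({z : ℝ × ℝ | z.1 ^ 2 + z.2 ^ 2 = 1}).Nonempty := ⟨(1, 0), by norm_num⟩
  obtain ⟨e₀, he₀S, he₀max⟩ := hScomp.exists_isMaxOn hSne hcont.continuousOn
  have hneg : ∀ z : ℝ × ℝ, H (-z) = H z := by
    intro z; have := hhom (-1) z; simpa using this
  obtain ⟨e, heS, hemax, he2⟩ : ∃ e : ℝ × ℝ, e.1 ^ 2 + e.2 ^ 2 = 1 ∧
      (∀ z : ℝ × ℝ, z.1 ^ 2 + z.2 ^ 2 = 1 → H z ≤ H e) ∧ 0 ≤ e.2 := by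
    rcases le_or_gt 0 e₀.2 with h | h
    · exact ⟨e₀, he₀S, fun z hz => he₀max hz, h⟩
    · refine ⟨-e₀, ?_, fun z hz => ?_, by simpa using h.le⟩
      · simp only [mem_setOf_eq] at he₀S
        simp only [Prod.fst_neg, Prod.snd_neg, neg_sq]; exact he₀S
      · rw [hneg]; exact he₀max hz
  set M : ℝ := H e with hM
  have hMnn : 0 ≤ M := hpos e
  have hanorm : anorm H = M := by
    apply le_antisymm
    · exact csSup_le (hSne.image H) (by rintro r ⟨z, hz, rfl⟩; exact hemax z hz)
    · exact le_csSup ⟨M, by rintro r ⟨z, hz, rfl⟩; exact hemax z hz⟩ ⟨e, heS, rfl⟩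
  have he1 : e.1 ^ 2 + e.2 ^ 2 = 1 := heS
  -- upper bound
  have hub : ∀ z : ℝ × ℝ, H z ≤ M * Real.sqrt (z.1 ^ 2 + z.2 ^ 2) := by
    intro z
    rcases eq_or_ne z 0 with rfl | hz
    · have : H (0 : ℝ × ℝ) = 0 := by simpa using hhom 0 0
      simp [this]
    · have hzsq : 0 < z.1 ^ 2 + z.2 ^ 2 := by
        have h1 : z.1 ≠ 0 ∨ z.2 ≠ 0 := by
          by_contra hc; push_neg at hc; exact hz (Prod.ext hc.1 hc.2)
        rcases h1 with h | h <;> positivity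
      have hnpos : 0 < Real.sqrt (z.1 ^ 2 + z.2 ^ 2) := Real.sqrt_pos.mpr hzsq
      have hnsq : (Real.sqrt (z.1 ^ 2 + z.2 ^ 2)) ^ 2 = z.1 ^ 2 + z.2 ^ 2 :=
        Real.sq_sqrt hzsq.le
      have hmem : ((Real.sqrt (z.1 ^ 2 + z.2 ^ 2))⁻¹ • z).1 ^ 2
          + ((Real.sqrt (z.1 ^ 2 + z.2 ^ 2))⁻¹ • z).2 ^ 2 = 1 := by
        simp only [Prod.smul_fst, Prod.smul_snd, smul_eq_mul]
        rw [mul_pow, mul_pow, ← mul_add, inv_pow, hnsq, inv_mul_cancel₀ hzsq.ne']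
      have heq : H z = Real.sqrt (z.1 ^ 2 + z.2 ^ 2)
          * H ((Real.sqrt (z.1 ^ 2 + z.2 ^ 2))⁻¹ • z) := by
        have h := hhom (Real.sqrt (z.1 ^ 2 + z.2 ^ 2)) ((Real.sqrt (z.1 ^ 2 + z.2 ^ 2))⁻¹ • z)
        rw [smul_smul, mul_inv_cancel₀ hnpos.ne', one_smul] at h
        rw [h, abs_of_pos hnpos]
      rw [heq]
      have := hemax _ hmem
      nlinarith
  -- subadditivity
  have hsub : ∀ u v : ℝ × ℝ, H (u + v) ≤ H u + H v := by
    intro u v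
    have h := hconv.2 (mem_univ u) (mem_univ v) (by norm_num : (0:ℝ) ≤ 1/2)
      (by norm_num : (0:ℝ) ≤ 1/2) (by norm_num)
    simp only [smul_eq_mul] at h
    have h2 : H ((1/2 : ℝ) • (u + v)) = (1/2) * H (u + v) := by
      rw [hhom]; norm_num
    rw [smul_add] at h2
    linarith
  -- key: perpendicular perturbation
  have hkey : ∀ v : ℝ × ℝ, v.1 * e.1 + v.2 * e.2 = 0 → M ≤ H (e + v) := by
    intro v hv
    have hKnn : (0:ℝ) ≤ v.1 ^ 2 + v.2 ^ 2 := by positivity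
    have hstep : ∀ s : ℝ, 0 < s → s ≤ 1 →
        M - M * (v.1 ^ 2 + v.2 ^ 2) * s ≤ H (e + v) := by
      intro s hs hs1
      have hup : H (e - s • v) ≤ M * Real.sqrt (1 + s ^ 2 * (v.1 ^ 2 + v.2 ^ 2)) := by
        have h := hub (e - s • v)
        have heq : (e - s • v).1 ^ 2 + (e - s • v).2 ^ 2
            = 1 + s ^ 2 * (v.1 ^ 2 + v.2 ^ 2) := by
          simp only [Prod.fst_sub, Prod.snd_sub, Prod.smul_fst, Prod.smul_snd, smul_eq_mul]
          nlinarith [he1, hv]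
        rwa [heq] at h
      have hsqrt : Real.sqrt (1 + s ^ 2 * (v.1 ^ 2 + v.2 ^ 2))
          ≤ 1 + s ^ 2 * (v.1 ^ 2 + v.2 ^ 2) := by
        have h1 : (1:ℝ) ≤ 1 + s ^ 2 * (v.1 ^ 2 + v.2 ^ 2) := by nlinarith
        calc Real.sqrt (1 + s ^ 2 * (v.1 ^ 2 + v.2 ^ 2))
            ≤ Real.sqrt ((1 + s ^ 2 * (v.1 ^ 2 + v.2 ^ 2)) ^ 2) := by
              apply Real.sqrt_le_sqrt; nlinarith
          _ = 1 + s ^ 2 * (v.1 ^ 2 + v.2 ^ 2) := Real.sqrt_sq (by linarith)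
      have hlow : 2 * M - H (e - s • v) ≤ H (e + s • v) := by
        have h2 : H ((e + s • v) + (e - s • v)) = 2 * M := by
          have heq2 : (e + s • v) + (e - s • v) = (2:ℝ) • e := by
            ext <;> simp <;> ring
          rw [heq2, hhom]; norm_num; exact hM.symm
        linarith [hsub (e + s • v) (e - s • v)]
      have hcvx : H (e + s • v) ≤ s * H (e + v) + (1 - s) * M := by
        have h := hconv.2 (mem_univ (e + v)) (mem_univ e) hs.le
          (by linarith : (0:ℝ) ≤ 1 - s) (by ring)
        have heq3 : s • (e + v) + (1 - s) • e = e + s • v := by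
          ext <;> simp <;> ring
        rw [heq3] at h
        simp only [smul_eq_mul] at h
        linarith
      have hs' : s * (M - M * (v.1 ^ 2 + v.2 ^ 2) * s) ≤ s * H (e + v) := by nlinarith
      have := le_of_mul_le_mul_left hs' hs
      linarith
    by_contra hcon
    push_neg at hcon
    rcases eq_or_lt_of_le (mul_nonneg hMnn hKnn) with hMK | hMK
    · have := hstep 1 one_pos le_rfl
      nlinarith
    · have hδpos : 0 < M - H (e + v) := by linarith
      have hspos : 0 < min 1 ((M - H (e + v)) / (2 * (M * (v.1 ^ 2 + v.2 ^ 2)))) :=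
        lt_min one_pos (by positivity)
      have hA := hstep _ hspos (min_le_left _ _)
      have hsle : min 1 ((M - H (e + v)) / (2 * (M * (v.1 ^ 2 + v.2 ^ 2))))
          ≤ (M - H (e + v)) / (2 * (M * (v.1 ^ 2 + v.2 ^ 2))) := min_le_right _ _
      have hB : M * (v.1 ^ 2 + v.2 ^ 2)
          * min 1 ((M - H (e + v)) / (2 * (M * (v.1 ^ 2 + v.2 ^ 2))))
          ≤ (M - H (e + v)) / 2 := by
        have h2 : M * (v.1 ^ 2 + v.2 ^ 2)
            * ((M - H (e + v)) / (2 * (M * (v.1 ^ 2 + v.2 ^ 2)))) = (M - H (e + v)) / 2 := by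
          rw [mul_div_assoc', mul_comm 2, mul_div_mul_left _ _ hMK.ne']
        nlinarith [hsle, hMK]
      linarith
  -- main inequality without abs
  have main : ∀ z : ℝ × ℝ, M * (z.1 * e.1 + z.2 * e.2) ≤ H z := by
    intro z
    rcases le_or_gt (z.1 * e.1 + z.2 * e.2) 0 with h | h
    · have := mul_nonpos_of_nonneg_of_nonpos hMnn h
      linarith [hpos z]
    · have hsne : (z.1 * e.1 + z.2 * e.2) ≠ 0 := h.ne'
      have hvperp : (((z.1 * e.1 + z.2 * e.2))⁻¹ • z - e).1 * e.1
          + (((z.1 * e.1 + z.2 * e.2))⁻¹ • z - e).2 * e.2 = 0 := by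
        simp only [Prod.fst_sub, Prod.snd_sub, Prod.smul_fst, Prod.smul_snd, smul_eq_mul]
        field_simp
        nlinarith [he1]
      have h1 := hkey _ hvperp
      have h2 : (z.1 * e.1 + z.2 * e.2) • (e + (((z.1 * e.1 + z.2 * e.2))⁻¹ • z - e)) = z := by
        ext <;> simp <;> field_simp
      have h3 := hhom (z.1 * e.1 + z.2 * e.2) (e + (((z.1 * e.1 + z.2 * e.2))⁻¹ • z - e))
      rw [h2, abs_of_pos h] at h3
      rw [h3]
      nlinarith
  refine ⟨Real.arccos e.1, ⟨Real.arccos_nonneg _, Real.arccos_le_pi _⟩, ?_⟩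
  have hcos : Real.cos (Real.arccos e.1) = e.1 :=
    Real.cos_arccos (by nlinarith) (by nlinarith)
  have hsin : Real.sin (Real.arccos e.1) = e.2 := by
    rw [Real.sin_arccos, show (1:ℝ) - e.1 ^ 2 = e.2 ^ 2 by linarith]
    exact Real.sqrt_sq he2
  rw [hcos, hsin, hanorm]
  intro x y
  rcases abs_cases (x * e.1 + y * e.2) with ⟨habs, _⟩ | ⟨habs, _⟩
  · rw [habs]; exact main (x, y)
  · rw [habs]
    have h := main (-(x, y) : ℝ × ℝ)
    rw [hneg] at h
    simp only [Prod.fst_neg, Prod.snd_neg] at h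
    nlinarith
end
end
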